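/- arXiv:math/0603705 — 2 statements merged into one kernel-verified Lean document; each statement's English description precedes it below -/
import Mathlib

section
/- Let m ≥ 2 and define t : ℕ → ℕ on {1,…,3m} by t(k) = k if k ≤ m, t(k) = 2m+1−k if m < k ≤ 2m, and t(k) = k−2m if 2m < k ≤ 3m. For any offset ρ with 0 ≤ ρ ≤ 2m, define φ(i) = t(ρ+i) for 1 ≤ i ≤ m. Then at least one of the following holds: (a) φ(i) = i for all i ∈ {1,…,m}; (b) there exists i ∈ {1,…,m−1} with φ(i) = i+1 and φ(i+1) = i; (c) there exists i ∈ {1,…,m−1} with φ(i) = i and φ(i+1) = i−1; (d) φ(1) = 1 and φ(2) = 1; (e) φ(m) = m and φ(m−1) = m. -/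
/-- Lemma 3.4 core: the source sequence `1,…,m` placed at any offset `ρ` in the
target sequence `1,…,m,m,…,1,1,…,m` yields one of the listed configurations. -/
theorem stmt_0 (m : ℕ) (hm : 2 ≤ m) (t : ℕ → ℕ)
    (ht1 : ∀ k, 1 ≤ k → k ≤ m → t k = k)
    (ht2 : ∀ k, m < k → k ≤ 2 * m → t k = 2 * m + 1 - k)
    (ht3 : ∀ k, 2 * m < k → k ≤ 3 * m → t k = k - 2 * m)
    (ρ : ℕ) (hρ : ρ ≤ 2 * m)
    (φ : ℕ → ℕ) (hφ : ∀ i, 1 ≤ i → i ≤ m → φ i = t (ρ + i)) :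
    (∀ i, 1 ≤ i → i ≤ m → φ i = i) ∨
    (∃ i, 1 ≤ i ∧ i ≤ m - 1 ∧ φ i = i + 1 ∧ φ (i + 1) = i) ∨
    (∃ i, 1 ≤ i ∧ i ≤ m - 1 ∧ φ i = i ∧ φ (i + 1) = i - 1) ∨
    (φ 1 = 1 ∧ φ 2 = 1) ∨
    (φ m = m ∧ φ (m - 1) = m) := by
  rcases Nat.even_or_odd ρ with ⟨r, hr⟩ | ⟨s, hs⟩
  · -- ρ = r + r (even)
    rcases Nat.eq_zero_or_pos r with h0 | hpos
    · -- ρ = 0 : case (a)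
      left; intro i h1 h2
      rw [hφ i h1 h2]
      have : ρ + i = i := by omega
      rw [this, ht1 i h1 h2]
    · by_cases hrm : r = m
      · -- ρ = 2m : case (a)
        left; intro i h1 h2
        rw [hφ i h1 h2, ht3 _ (by omega) (by omega)]; omega
      · -- 1 ≤ r ≤ m-1 : case (b) with i = m - r
        have hrle : r ≤ m - 1 := by omega
        right; left
        refine ⟨m - r, by omega, by omega, ?_, ?_⟩
        · rw [hφ _ (by omega) (by omega), ht2 _ (by omega) (by omega)]; omega
        · rw [hφ _ (by omega) (by omega), ht2 _ (by omega) (by omega)]; omega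
  · -- ρ = 2s + 1 (odd)
    have hs' : s ≤ m - 1 := by omega
    rcases Nat.eq_zero_or_pos s with h0 | hpos
    · -- ρ = 1 : case (e)
      right; right; right; right
      constructor
      · rw [hφ m (by omega) le_rfl, ht2 _ (by omega) (by omega)]; omega
      · rw [hφ (m - 1) (by omega) (by omega), ht1 _ (by omega) (by omega)]; omega
    · by_cases hsm : s = m - 1
      · -- ρ = 2m - 1 : case (d)
        right; right; right; left
        constructor
        · rw [hφ 1 le_rfl (by omega), ht2 _ (by omega) (by omega)]; omega
        · rw [hφ 2 (by omega) (by omega), ht3 _ (by omega) (by omega)]; omega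
      · -- 1 ≤ s ≤ m-2 : case (c) with i = m - s
        have : s ≤ m - 2 := by omega
        right; right; left
        refine ⟨m - s, by omega, by omega, ?_, ?_⟩
        · rw [hφ _ (by omega) (by omega), ht2 _ (by omega) (by omega)]; omega
        · rw [hφ _ (by omega) (by omega), ht2 _ (by omega) (by omega)]; omega
end

section
/- Let N ≥ 1 and identify positions with ℤ/N. Suppose ℤ/N is written as a concatenation of k ≥ 1 nonempty cyclic intervals ('blocks') B₁, …, B_k, and also partitioned into a family of nonempty cyclic intervals ('parallel classes') C₁, …, C_r. If no class C_j contains any entire block B_i as a subset, then r ≥ k. -/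
/-- A subset of `ZMod N` is a cyclic interval if it is a set of consecutive
residues. -/
def IsCyclicInterval {N : ℕ} (S : Finset (ZMod N)) : Prop :=
  ∃ (a : ZMod N) (l : ℕ), S = (Finset.range l).image fun t : ℕ => a + (t : ZMod N)

/-- A cyclic interval has at most one "end": a point `x ∈ S` with `x + 1 ∉ S`. -/
lemma end_unique {N : ℕ} (S : Finset (ZMod N)) (hS : IsCyclicInterval S)
    {x y : ZMod N} (hx : x ∈ S) (hx1 : x + 1 ∉ S) (hy : y ∈ S) (hy1 : y + 1 ∉ S) :
    x = y := by
  obtain ⟨a, l, rfl⟩ := hS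
  have key : ∀ z : ZMod N, z ∈ (Finset.range l).image (fun t : ℕ => a + (t : ZMod N)) →
      z + 1 ∉ (Finset.range l).image (fun t : ℕ => a + (t : ZMod N)) →
      z = a + ((l - 1 : ℕ) : ZMod N) := by
    intro z hz hz1
    obtain ⟨t, ht, rfl⟩ := Finset.mem_image.mp hz
    rw [Finset.mem_range] at ht
    have htl : t = l - 1 := by
      by_contra h
      have ht1 : t + 1 < l := by omega
      apply hz1
      refine Finset.mem_image.mpr ⟨t + 1, Finset.mem_range.mpr ht1, ?_⟩
      push_cast
      ring
    rw [htl]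
  rw [key x hx hx1, key y hy hy1]

/-- Break-counting pigeonhole: if `ZMod N` is written as a disjoint union of
`k` nonempty cyclic blocks `B i`, and also partitioned into `r` nonempty
cyclic parallel classes `C j`, and no class contains an entire block, then
`r ≥ k`. -/
theorem stmt_9 (N : ℕ) [NeZero N] (k r : ℕ) (hk : 1 ≤ k) (hr : 1 ≤ r)
    (B : Fin k → Finset (ZMod N)) (C : Fin r → Finset (ZMod N))
    (hBne : ∀ i, (B i).Nonempty) (hCne : ∀ j, (C j).Nonempty)
    (hBint : ∀ i, IsCyclicInterval (B i)) (hCint : ∀ j, IsCyclicInterval (C j))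
    (hBdisj : ∀ i₁ i₂, i₁ ≠ i₂ → Disjoint (B i₁) (B i₂))
    (hCdisj : ∀ j₁ j₂, j₁ ≠ j₂ → Disjoint (C j₁) (C j₂))
    (hBcover : Finset.univ.biUnion B = (Finset.univ : Finset (ZMod N)))
    (hCcover : Finset.univ.biUnion C = (Finset.univ : Finset (ZMod N)))
    (hnosub : ∀ j i, ¬ B i ⊆ C j) :
    k ≤ r := by
  classical
  have hmem : ∀ x : ZMod N, ∃ j, x ∈ C j := by
    intro x
    have : x ∈ Finset.univ.biUnion C := by rw [hCcover]; exact Finset.mem_univ x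
    simpa [Finset.mem_biUnion] using this
  choose f hf using hmem
  have hfeq : ∀ (x : ZMod N) (j : Fin r), x ∈ C j → f x = j := by
    intro x j hx
    by_contra h
    exact Finset.disjoint_left.mp (hCdisj _ _ h) (hf x) hx
  -- each block contains a break
  have hbreak : ∀ i, ∃ x, x ∈ B i ∧ f x ≠ f (x + 1) := by
    intro i
    by_contra h
    push_neg at h
    obtain ⟨a, l, hBi⟩ := hBint i
    have key : ∀ t, t < l → a + (t : ZMod N) ∈ C (f a) := by
      intro t
      induction t with
      | zero => intro _; simpa using hf a
      | succ t ih =>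
        intro ht
        have ht' : t < l := Nat.lt_of_succ_lt ht
        have hmemB : a + (t : ZMod N) ∈ B i := by
          rw [hBi]
          exact Finset.mem_image.mpr ⟨t, Finset.mem_range.mpr ht', rfl⟩
        have h1 : f (a + (t : ZMod N)) = f a := hfeq _ _ (ih ht')
        have h2 : f (a + (t : ZMod N) + 1) = f (a + (t : ZMod N)) := (h _ hmemB).symm
        have h3 : a + (t : ZMod N) + 1 ∈ C (f (a + (t : ZMod N) + 1)) := hf _
        rw [h2, h1] at h3
        have : a + ((t + 1 : ℕ) : ZMod N) = a + (t : ZMod N) + 1 := by push_cast; ring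
        rw [this]
        exact h3
    have hsub : B i ⊆ C (f a) := by
      intro x hx
      rw [hBi] at hx
      obtain ⟨t, ht, rfl⟩ := Finset.mem_image.mp hx
      exact key t (Finset.mem_range.mp ht)
    exact hnosub (f a) i hsub
  choose b hbB hbf using hbreak
  have hinj : Function.Injective (fun i => f (b i)) := by
    intro i₁ i₂ hij
    simp only at hij
    by_contra hne
    have h1 : b i₁ ∈ C (f (b i₁)) := hf _
    have h1' : b i₁ + 1 ∉ C (f (b i₁)) := fun hm => hbf i₁ (hfeq _ _ hm).symm
    have h2 : b i₂ ∈ C (f (b i₁)) := hij ▸ hf (b i₂)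
    have h2' : b i₂ + 1 ∉ C (f (b i₁)) := fun hm => hbf i₂ ((hij ▸ hfeq _ _ hm : f (b i₂ + 1) = f (b i₂))).symm
    have heq : b i₁ = b i₂ := end_unique _ (hCint _) h1 h1' h2 h2'
    exact Finset.disjoint_left.mp (hBdisj i₁ i₂ hne) (hbB i₁) (heq ▸ hbB i₂)
  simpa using Fintype.card_le_of_injective _ hinj
end
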